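/- arXiv:1211.3207 — 2 statements merged into one kernel-verified Lean document; each statement's English description precedes it below -/
import Mathlib

section
/- Let Λ be a linearly ordered abelian group, ι an index type, and (G_i)_{i ∈ ι} a family of groups such that each G_i admits a free Lyndon length function l_i : G_i → Λ. Then the free product ∗_{i ∈ ι} G_i (formalized as Monoid.CoprodI G) admits a free Lyndon length function L : Monoid.CoprodI G → Λ such that L(ι_i(g)) = l_i(g) for every i and every g ∈ G_i, where ι_i : G_i →* Monoid.CoprodI G are the canonical inclusions. -/
/-- `LyndonC l f g = l f + l g - l (f⁻¹ * g)`, twice the Gromov product `c(f,g)`. -/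
def LyndonC {G : Type*} [Group G] {Λ : Type*} [AddCommGroup Λ] [LinearOrder Λ] [IsOrderedAddMonoid Λ]
    (l : G → Λ) (f g : G) : Λ :=
  l f + l g - l (f⁻¹ * g)

/-- `l : G → Λ` is a Lyndon length function. -/
structure IsLyndonLength {G : Type*} [Group G] {Λ : Type*} [AddCommGroup Λ] [LinearOrder Λ] [IsOrderedAddMonoid Λ]
    (l : G → Λ) : Prop where
  map_one : l 1 = 0
  nonneg : ∀ g : G, 0 ≤ l g
  map_inv : ∀ g : G, l g⁻¹ = l g
  isosceles : ∀ f g h : G, LyndonC l f g > LyndonC l f h → LyndonC l f h = LyndonC l g h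
  two_divides : ∀ f g : G, ∃ a : Λ, LyndonC l f g = a + a

/-- A free Lyndon length function: additionally `l (g ^ 2) > l g` for all `g ≠ 1`. -/
def IsFreeLyndonLength {G : Type*} [Group G] {Λ : Type*} [AddCommGroup Λ] [LinearOrder Λ] [IsOrderedAddMonoid Λ]
    (l : G → Λ) : Prop :=
  IsLyndonLength l ∧ ∀ g : G, g ≠ 1 → l g < l (g ^ 2)

/-- A regular Lyndon length function. -/
def IsRegularLyndonLength {G : Type*} [Group G] {Λ : Type*} [AddCommGroup Λ] [LinearOrder Λ] [IsOrderedAddMonoid Λ]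
    (l : G → Λ) : Prop :=
  ∀ g f : G, ∃ u g₁ f₁ : G, g = u * g₁ ∧ f = u * f₁ ∧
    l g = l u + l g₁ ∧ l f = l u + l f₁ ∧ LyndonC l g f = l u + l u

/-- A group is finitely presented if it is isomorphic to a presented group on finitely many
generators with finitely many relators. -/
def IsFinitelyPresented (G : Type*) [Group G] : Prop :=
  ∃ (n : ℕ) (R : Set (FreeGroup (Fin n))), R.Finite ∧ Nonempty (G ≃* PresentedGroup R)


section Abstract
variable {G : Type*} [Group G] {Λ : Type*} [AddCommGroup Λ] [LinearOrder Λ] [IsOrderedAddMonoid Λ]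
  {l : G → Λ} (hl : IsLyndonLength l)
include hl

theorem LyndonC_symm (f g : G) : LyndonC l f g = LyndonC l g f := by
  unfold LyndonC
  rw [show g⁻¹ * f = (f⁻¹ * g)⁻¹ by group, hl.map_inv]
  abel

theorem LyndonC_one_right (f : G) : LyndonC l f 1 = 0 := by
  unfold LyndonC
  rw [mul_one, hl.map_inv, hl.map_one]; abel

theorem LyndonC_one_left (f : G) : LyndonC l 1 f = 0 := by
  rw [LyndonC_symm hl, LyndonC_one_right hl]

theorem LyndonC_nonneg (f g : G) : 0 ≤ LyndonC l f g := by
  by_contra h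
  push_neg at h
  have h2 : LyndonC l f 1 > LyndonC l f g := by rw [LyndonC_one_right hl]; exact h
  have := hl.isosceles f 1 g h2
  rw [LyndonC_one_left hl] at this
  exact absurd (this ▸ h) (lt_irrefl 0)

theorem LyndonC_self (f : G) : LyndonC l f f = l f + l f := by
  unfold LyndonC; rw [inv_mul_cancel, hl.map_one]; abel

theorem LyndonC_le_left (f g : G) : LyndonC l f g ≤ l f + l f := by
  by_contra h
  push_neg at h
  rw [← LyndonC_self hl f] at h
  have := hl.isosceles f g f h
  rw [LyndonC_self hl f, LyndonC_symm hl g f] at this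
  rw [LyndonC_self hl] at h
  exact absurd (this ▸ h) (lt_irrefl _)

theorem LyndonC_le_right (f g : G) : LyndonC l f g ≤ l g + l g := by
  rw [LyndonC_symm hl]; exact LyndonC_le_left hl g f

theorem l_sq_le (g : G) : l (g ^ 2) ≤ l g + l g := by
  have := LyndonC_nonneg hl g⁻¹ g
  unfold LyndonC at this
  rw [hl.map_inv, inv_inv, ← sq] at this
  exact le_of_sub_nonneg this

omit hl
variable (hf : IsFreeLyndonLength l)
include hf

theorem l_pos_of_ne_one {g : G} (hg : g ≠ 1) : 0 < l g := by
  have h1 := hf.2 g hg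
  have h2 := l_sq_le hf.1 g
  have h3 : l g < l g + l g := lt_of_lt_of_le h1 h2
  exact (lt_add_iff_pos_left _).mp h3

theorem l_eq_zero_iff {g : G} : l g = 0 ↔ g = 1 := by
  constructor
  · intro h; by_contra hg; exact absurd h (ne_of_gt (l_pos_of_ne_one hf hg))
  · intro h; rw [h, hf.1.map_one]

theorem sq_ne_one' {g : G} (hg : g ≠ 1) : g ^ 2 ≠ 1 := by
  intro h
  have := hf.2 g hg
  rw [h, hf.1.map_one] at this
  exact absurd this (not_lt.2 (hf.1.nonneg g))

end Abstract

section FreeProd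
set_option linter.unusedSectionVars false
open Monoid Monoid.CoprodI

variable {Λ : Type*} [AddCommGroup Λ] [LinearOrder Λ] [IsOrderedAddMonoid Λ] {ι : Type*}
  (G : ι → Type*) [∀ i, Group (G i)] (l : ∀ i, G i → Λ)

/-- inverse of a letter -/
def FPletterInv (a : Σ i, G i) : Σ i, G i := ⟨a.1, a.2⁻¹⟩

/-- inverse of a word (as a list of letters) -/
def FPwinv (A : List (Σ i, G i)) : List (Σ i, G i) := (A.map (FPletterInv G)).reverse

/-- total length of a list of letters -/
def FPlam (A : List (Σ i, G i)) : Λ := (A.map fun a => l a.1 a.2).sum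

/-- product of a list of letters in the free product -/
def FPpi (A : List (Σ i, G i)) : Monoid.CoprodI G :=
  (A.map fun a => Monoid.CoprodI.of a.2).prod

/-- reduced list -/
def FPRed (A : List (Σ i, G i)) : Prop :=
  (∀ a ∈ A, a.2 ≠ 1) ∧ A.IsChain (fun a b => a.1 ≠ b.1)

@[simp] theorem FPlam_nil : FPlam G l [] = 0 := rfl

theorem FPlam_cons (a : Σ i, G i) (A : List (Σ i, G i)) :
    FPlam G l (a :: A) = l a.1 a.2 + FPlam G l A := by
  simp [FPlam]

theorem FPlam_append (A B : List (Σ i, G i)) :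
    FPlam G l (A ++ B) = FPlam G l A + FPlam G l B := by
  simp [FPlam]

theorem FPlam_winv (hl : ∀ i g, l i (g⁻¹) = l i g) (A : List (Σ i, G i)) :
    FPlam G l (FPwinv G A) = FPlam G l A := by
  simp [FPlam, FPwinv, List.sum_reverse, FPletterInv, Function.comp_def, hl]

@[simp] theorem FPpi_nil : FPpi G [] = 1 := rfl

theorem FPpi_cons (a : Σ i, G i) (A : List (Σ i, G i)) :
    FPpi G (a :: A) = Monoid.CoprodI.of a.2 * FPpi G A := by
  simp [FPpi]

theorem FPpi_append (A B : List (Σ i, G i)) :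
    FPpi G (A ++ B) = FPpi G A * FPpi G B := by
  simp [FPpi]

theorem FPpi_winv (A : List (Σ i, G i)) : FPpi G (FPwinv G A) = (FPpi G A)⁻¹ := by
  induction A with
  | nil => simp [FPwinv]
  | cons a A ih =>
    rw [FPpi_cons, show FPwinv G (a :: A) = FPwinv G A ++ [FPletterInv G a] by
      simp [FPwinv], FPpi_append, ih]
    simp [FPpi, FPletterInv, mul_inv_rev]

theorem FPRed_nil : FPRed G ([] : List (Σ i, G i)) := ⟨by simp, List.isChain_nil⟩

theorem FPRed_of_cons {a : Σ i, G i} {A : List (Σ i, G i)} (h : FPRed G (a :: A)) :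
    FPRed G A := ⟨fun x hx => h.1 x (List.mem_cons_of_mem a hx), h.2.tail⟩

theorem FPRed_winv {A : List (Σ i, G i)} (h : FPRed G A) : FPRed G (FPwinv G A) := by
  constructor
  · intro x hx
    simp only [FPwinv, List.mem_reverse, List.mem_map] at hx
    obtain ⟨y, hy, rfl⟩ := hx
    exact inv_ne_one.2 (h.1 y hy)
  · rw [FPwinv, List.isChain_reverse, List.isChain_map]
    exact List.IsChain.imp (fun a b hab => Ne.symm hab) h.2

/-- the reduced word of an element -/
noncomputable def FPrho (x : Monoid.CoprodI G) : List (Σ i, G i) :=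
  letI := Classical.decEq ι
  letI : ∀ i, DecidableEq (G i) := fun _ => Classical.decEq _
  (Monoid.CoprodI.Word.equiv x).toList

theorem FPRed_rho (x : Monoid.CoprodI G) : FPRed G (FPrho G x) := by
  letI := Classical.decEq ι
  letI : ∀ i, DecidableEq (G i) := fun _ => Classical.decEq _
  exact ⟨(Monoid.CoprodI.Word.equiv x).ne_one, (Monoid.CoprodI.Word.equiv x).chain_ne⟩

theorem FPpi_rho (x : Monoid.CoprodI G) : FPpi G (FPrho G x) = x := by
  letI := Classical.decEq ι
  letI : ∀ i, DecidableEq (G i) := fun _ => Classical.decEq _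
  show Monoid.CoprodI.Word.prod (Monoid.CoprodI.Word.equiv x) = x
  exact Monoid.CoprodI.Word.equiv.symm_apply_apply x

theorem FPrho_eq {x : Monoid.CoprodI G} {A : List (Σ i, G i)}
    (h1 : FPRed G A) (h2 : FPpi G A = x) : FPrho G x = A := by
  letI := Classical.decEq ι
  letI : ∀ i, DecidableEq (G i) := fun _ => Classical.decEq _
  have : Monoid.CoprodI.Word.equiv.symm ⟨A, h1.1, h1.2⟩ = x := h2
  have h3 : (⟨A, h1.1, h1.2⟩ : Monoid.CoprodI.Word G) = Monoid.CoprodI.Word.equiv x :=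
    (Equiv.symm_apply_eq _).mp this
  exact (congrArg Monoid.CoprodI.Word.toList h3).symm

end FreeProd

section Cword
set_option linter.unusedSectionVars false
attribute [local instance] Classical.propDecidable

variable {Λ : Type*} [AddCommGroup Λ] [LinearOrder Λ] [IsOrderedAddMonoid Λ] {ι : Type*}
  (G : ι → Type*) [∀ i, Group (G i)] (l : ∀ i, G i → Λ)

/-- the factor contribution to the Gromov product -/
noncomputable def FPCfac (a b : Σ i, G i) : Λ :=
  if h : b.1 = a.1 then LyndonC (l a.1) a.2 (h ▸ b.2) else 0

/-- the Gromov product of two reduced words -/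
noncomputable def FPCw : List (Σ i, G i) → List (Σ i, G i) → Λ
  | [], _ => 0
  | _ :: _, [] => 0
  | a :: A, b :: B =>
    if a = b then l a.1 a.2 + l a.1 a.2 + FPCw A B else FPCfac G l a b

@[simp] theorem FPCw_nil (B : List (Σ i, G i)) : FPCw G l [] B = 0 := by
  cases B <;> rfl

@[simp] theorem FPCw_nil' (A : List (Σ i, G i)) : FPCw G l A [] = 0 := by
  cases A <;> rfl

theorem FPCw_cons (a b : Σ i, G i) (A B : List (Σ i, G i)) :
    FPCw G l (a :: A) (b :: B) =
      if a = b then l a.1 a.2 + l a.1 a.2 + FPCw G l A B else FPCfac G l a b := rfl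

theorem FPCw_cons_same (a : Σ i, G i) (A B : List (Σ i, G i)) :
    FPCw G l (a :: A) (a :: B) = l a.1 a.2 + l a.1 a.2 + FPCw G l A B := by
  rw [FPCw_cons, if_pos rfl]

theorem FPCw_cons_ne {a b : Σ i, G i} (h : a ≠ b) (A B : List (Σ i, G i)) :
    FPCw G l (a :: A) (b :: B) = FPCfac G l a b := by
  rw [FPCw_cons, if_neg h]

theorem FPCfac_same (i : ι) (x y : G i) :
    FPCfac G l ⟨i, x⟩ ⟨i, y⟩ = LyndonC (l i) x y := by
  simp [FPCfac]

theorem FPCfac_ne {i j : ι} (h : j ≠ i) (x : G i) (y : G j) :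
    FPCfac G l ⟨i, x⟩ ⟨j, y⟩ = 0 := dif_neg h

variable (hl : ∀ i, IsFreeLyndonLength (l i))
include hl

theorem FPCfac_nonneg (a b : Σ i, G i) : 0 ≤ FPCfac G l a b := by
  obtain ⟨i, x⟩ := a; obtain ⟨j, y⟩ := b
  by_cases h : j = i
  · subst h; rw [FPCfac_same]; exact LyndonC_nonneg (hl _).1 x y
  · rw [FPCfac_ne G l h]

theorem FPCfac_le_left (a b : Σ i, G i) :
    FPCfac G l a b ≤ l a.1 a.2 + l a.1 a.2 := by
  obtain ⟨i, x⟩ := a; obtain ⟨j, y⟩ := b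
  by_cases h : j = i
  · subst h; rw [FPCfac_same]; exact LyndonC_le_left (hl _).1 x y
  · rw [FPCfac_ne G l h]
    exact add_nonneg ((hl _).1.nonneg x) ((hl _).1.nonneg x)

theorem FPCw_nonneg (A B : List (Σ i, G i)) : 0 ≤ FPCw G l A B := by
  induction A generalizing B with
  | nil => simp
  | cons a A ih =>
    cases B with
    | nil => simp
    | cons b B =>
      rw [FPCw_cons]
      split
      · have h1 := (hl a.1).1.nonneg a.2
        exact add_nonneg (add_nonneg h1 h1) (ih B)
      · exact FPCfac_nonneg G l hl a b

theorem FPCw_two_divides (A B : List (Σ i, G i)) : ∃ c : Λ, FPCw G l A B = c + c := by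
  induction A generalizing B with
  | nil => exact ⟨0, by simp⟩
  | cons a A ih =>
    cases B with
    | nil => exact ⟨0, by simp⟩
    | cons b B =>
      rw [FPCw_cons]
      by_cases hab : a = b
      · obtain ⟨c, hc⟩ := ih B
        refine ⟨l a.1 a.2 + c, ?_⟩
        rw [if_pos hab, hc]; abel
      · rw [if_neg hab]
        obtain ⟨i, x⟩ := a; obtain ⟨j, y⟩ := b
        by_cases h : j = i
        · subst h; rw [FPCfac_same]; exact (hl _).1.two_divides x y
        · exact ⟨0, by rw [FPCfac_ne G l h, add_zero]⟩

theorem FPCw_prefix (P X Y : List (Σ i, G i)) :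
    FPCw G l (P ++ X) (P ++ Y) = FPlam G l P + FPlam G l P + FPCw G l X Y := by
  induction P with
  | nil => simp
  | cons p P ih =>
    rw [List.cons_append, List.cons_append, FPCw_cons, if_pos rfl, ih,
      FPlam_cons]
    abel

theorem FPCw_isosceles (A B H : List (Σ i, G i))
    (h : FPCw G l A B > FPCw G l A H) : FPCw G l A H = FPCw G l B H := by
  induction A generalizing B H with
  | nil => rw [FPCw_nil] at h; exact absurd h (lt_irrefl 0)
  | cons a A ih =>
    cases B with
    | nil =>
      rw [FPCw_nil'] at h
      exact absurd h (not_lt.2 (FPCw_nonneg G l hl _ _))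
    | cons b B =>
      cases H with
      | nil => rw [FPCw_nil', FPCw_nil']
      | cons c H =>
        by_cases hab : a = b
        · subst hab
          by_cases hac : a = c
          · subst hac
            rw [FPCw_cons_same, FPCw_cons_same] at h
            rw [FPCw_cons_same, FPCw_cons_same, ih B H (lt_of_add_lt_add_left h)]
          · rw [FPCw_cons_ne G l hac, FPCw_cons_ne G l hac]
        · rw [FPCw_cons_ne G l hab] at h
          by_cases hac : a = c
          · subst hac
            rw [FPCw_cons_same] at h
            exfalso
            have h1 := FPCfac_le_left G l hl a b
            have h2 := FPCw_nonneg G l hl A H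
            exact absurd h (not_lt.2 (h1.trans (le_add_of_nonneg_right h2)))
          · rw [FPCw_cons_ne G l hac] at h ⊢
            by_cases hbc : b = c
            · subst hbc
              exact absurd h (lt_irrefl _)
            · rw [FPCw_cons_ne G l hbc]
              obtain ⟨i, x⟩ := a; obtain ⟨j, y⟩ := b; obtain ⟨k, z⟩ := c
              by_cases hji : j = i
              · subst hji
                by_cases hki : k = j
                · subst hki
                  rw [FPCfac_same, FPCfac_same] at h
                  rw [FPCfac_same, FPCfac_same]
                  exact (hl _).1.isosceles x y z h
                · rw [FPCfac_ne G l hki] at h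
                  rw [FPCfac_ne G l hki, FPCfac_ne G l hki]
              · rw [FPCfac_ne G l hji] at h
                exact absurd h (not_lt.2 (FPCfac_nonneg G l hl _ _))
end Cword

section Main
set_option linter.unusedSectionVars false
attribute [local instance] Classical.propDecidable

variable {Λ : Type*} [AddCommGroup Λ] [LinearOrder Λ] [IsOrderedAddMonoid Λ] {ι : Type*}
  (G : ι → Type*) [∀ i, Group (G i)] (l : ∀ i, G i → Λ)

/-- the length function on the free product -/
noncomputable def FPL : Monoid.CoprodI G → Λ := fun x => FPlam G l (FPrho G x)

theorem FPL_pi {A : List (Σ i, G i)} (h : FPRed G A) :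
    FPL G l (FPpi G A) = FPlam G l A := by
  rw [FPL, FPrho_eq G h rfl]

theorem FPL_one : FPL G l 1 = 0 := by
  rw [show (1 : Monoid.CoprodI G) = FPpi G [] from rfl, FPL_pi G l (FPRed_nil G), FPlam_nil]

theorem FPwinv_nil : FPwinv G ([] : List (Σ i, G i)) = [] := rfl

theorem FPwinv_cons (a : Σ i, G i) (A : List (Σ i, G i)) :
    FPwinv G (a :: A) = FPwinv G A ++ [FPletterInv G a] := by simp [FPwinv]

theorem FPwinv_append (A B : List (Σ i, G i)) :
    FPwinv G (A ++ B) = FPwinv G B ++ FPwinv G A := by simp [FPwinv]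

theorem FPwinv_winv (A : List (Σ i, G i)) : FPwinv G (FPwinv G A) = A := by
  simp [FPwinv, List.map_reverse, Function.comp_def, FPletterInv]
  refine List.map_id'' (fun x => ?_) A
  exact Sigma.ext rfl (heq_of_eq (inv_inv x.2))

theorem FPwinv_head? (A : List (Σ i, G i)) :
    (FPwinv G A).head? = A.getLast?.map (FPletterInv G) := by
  rw [FPwinv, List.head?_reverse, List.getLast?_map]

theorem FPwinv_getLast? (A : List (Σ i, G i)) :
    (FPwinv G A).getLast? = A.head?.map (FPletterInv G) := by
  rw [FPwinv, List.getLast?_reverse, List.head?_map]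

variable (hl : ∀ i, IsFreeLyndonLength (l i))
include hl

theorem FPlam_nonneg (A : List (Σ i, G i)) : 0 ≤ FPlam G l A := by
  refine List.sum_nonneg ?_
  intro x hx
  simp only [List.mem_map] at hx
  obtain ⟨a, _, rfl⟩ := hx
  exact (hl a.1).1.nonneg a.2

theorem FPL_inv (x : Monoid.CoprodI G) : FPL G l x⁻¹ = FPL G l x := by
  have h1 : FPpi G (FPwinv G (FPrho G x)) = x⁻¹ := by
    rw [FPpi_winv, FPpi_rho]
  rw [← h1, FPL_pi G l (FPRed_winv G (FPRed_rho G x)),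
    FPlam_winv G l (fun i g => (hl i).1.map_inv g)]
  rfl

/-- reducedness of a word of the shape `A⁻¹ · m · B` -/
theorem FPRed_sandwich {A B : List (Σ i, G i)} {m : Σ i, G i} (hm : m.2 ≠ 1)
    (hA : FPRed G A) (hB : FPRed G B)
    (hA' : ∀ p ∈ A.head?, p.1 ≠ m.1) (hB' : ∀ q ∈ B.head?, m.1 ≠ q.1) :
    FPRed G (FPwinv G A ++ m :: B) := by
  have hwA := FPRed_winv G hA
  constructor
  · intro a ha
    rcases List.mem_append.1 ha with h | h
    · exact hwA.1 a h
    · rcases List.mem_cons.1 h with rfl | h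
      · exact hm
      · exact hB.1 a h
  · rw [List.isChain_append]
    refine ⟨hwA.2, ?_, ?_⟩
    · rw [List.isChain_cons]
      exact ⟨hB', hB.2⟩
    · intro p hp q hq
      simp only [List.head?_cons, Option.mem_def, Option.some.injEq] at hq
      subst hq
      rw [FPwinv_getLast?] at hp
      simp only [Option.mem_def, Option.map_eq_some_iff] at hp
      obtain ⟨a, ha, rfl⟩ := hp
      exact hA' a ha

theorem FPlam_sandwich (A B : List (Σ i, G i)) (m : Σ i, G i) :
    FPlam G l (FPwinv G A ++ m :: B) = FPlam G l A + l m.1 m.2 + FPlam G l B := by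
  rw [FPlam_append, FPlam_cons, FPlam_winv G l (fun i g => (hl i).1.map_inv g)]
  abel

theorem FPRed_tail_ne {a : Σ i, G i} {A : List (Σ i, G i)} (h : FPRed G (a :: A)) :
    ∀ p ∈ A.head?, a.1 ≠ p.1 := by
  have := h.2
  rw [List.isChain_cons] at this
  exact this.1

/-- the main bridge: the Gromov product of two reduced words is `FPCw` -/
theorem FPmain (A B : List (Σ i, G i)) (hA : FPRed G A) (hB : FPRed G B) :
    LyndonC (FPL G l) (FPpi G A) (FPpi G B) = FPCw G l A B := by
  induction A generalizing B with
  | nil =>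
    rw [FPCw_nil]
    unfold LyndonC
    rw [FPpi_nil, FPL_one, inv_one, one_mul]
    abel
  | cons a A ih =>
    cases B with
    | nil =>
      rw [FPCw_nil']
      unfold LyndonC
      rw [FPpi_nil, mul_one, FPL_inv G l hl, FPL_one]
      abel
    | cons b B =>
      have hA' := FPRed_of_cons G hA
      have hB' := FPRed_of_cons G hB
      by_cases hab : a = b
      · subst hab
        rw [FPCw_cons_same]
        have key : (FPpi G (a :: A))⁻¹ * FPpi G (a :: B) = (FPpi G A)⁻¹ * FPpi G B := by
          rw [FPpi_cons, FPpi_cons, mul_inv_rev]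
          group
        have IH := ih B hA' hB'
        unfold LyndonC at IH ⊢
        rw [key, FPL_pi G l hA, FPL_pi G l hB, FPlam_cons, FPlam_cons, ← IH,
          FPL_pi G l hA', FPL_pi G l hB']
        abel
      · obtain ⟨i, x⟩ := a
        obtain ⟨j, y⟩ := b
        have hx1 : x ≠ 1 := hA.1 ⟨i, x⟩ (List.mem_cons_self)
        have hy1 : y ≠ 1 := hB.1 ⟨j, y⟩ (List.mem_cons_self)
        by_cases hji : j = i
        · subst hji
          have hxy : x ≠ y := fun hc => hab (by rw [hc])
          have hm : x⁻¹ * y ≠ 1 := fun hc => hxy (by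
            have := congrArg (fun t => x * t) hc
            simpa using this.symm)
          have hred : FPRed G (FPwinv G A ++ (⟨j, x⁻¹ * y⟩ : Σ i, G i) :: B) :=
            FPRed_sandwich G l hl hm hA' hB'
              (fun p hp => (FPRed_tail_ne G l hl hA p hp).symm)
              (fun q hq => FPRed_tail_ne G l hl hB q hq)
          have key : (FPpi G (⟨j, x⟩ :: A))⁻¹ * FPpi G ((⟨j, y⟩ : Σ i, G i) :: B) =
              FPpi G (FPwinv G A ++ (⟨j, x⁻¹ * y⟩ : Σ i, G i) :: B) := by
            rw [FPpi_append, FPpi_winv, FPpi_cons, FPpi_cons, FPpi_cons, mul_inv_rev,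
              map_mul, map_inv]
            group
          rw [FPCw_cons_ne G l hab, FPCfac_same]
          unfold LyndonC
          rw [key, FPL_pi G l hA, FPL_pi G l hB, FPL_pi G l hred,
            FPlam_sandwich G l hl, FPlam_cons, FPlam_cons]
          abel
        · have hred : FPRed G (FPwinv G A ++ (⟨i, x⁻¹⟩ : Σ i, G i) :: ⟨j, y⟩ :: B) :=
            FPRed_sandwich G l hl (inv_ne_one.2 hx1) hA' hB
              (fun p hp => (FPRed_tail_ne G l hl hA p hp).symm)
              (by
                intro q hq
                simp only [List.head?_cons, Option.mem_def, Option.some.injEq] at hq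
                subst hq
                exact fun hc => hji hc.symm)
          have key : (FPpi G ((⟨i, x⟩ : Σ i, G i) :: A))⁻¹ * FPpi G ((⟨j, y⟩ : Σ i, G i) :: B) =
              FPpi G (FPwinv G A ++ (⟨i, x⁻¹⟩ : Σ i, G i) :: ⟨j, y⟩ :: B) := by
            rw [FPpi_append, FPpi_winv, FPpi_cons, FPpi_cons, FPpi_cons, FPpi_cons, mul_inv_rev,
              map_inv]
            group
          rw [FPCw_cons_ne G l hab, FPCfac_ne G l hji]
          unfold LyndonC
          rw [key, FPL_pi G l hA, FPL_pi G l hB, FPL_pi G l hred,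
            FPlam_sandwich G l hl, FPlam_cons, FPlam_cons]
          dsimp only
          rw [(hl i).1.map_inv x]
          abel

end Main

section Square
set_option linter.unusedSectionVars false
attribute [local instance] Classical.propDecidable

variable {Λ : Type*} [AddCommGroup Λ] [LinearOrder Λ] [IsOrderedAddMonoid Λ] {ι : Type*}
  (G : ι → Type*) [∀ i, Group (G i)] (l : ∀ i, G i → Λ)

theorem FPletterInv_linv (a : Σ i, G i) : FPletterInv G (FPletterInv G a) = a := by
  exact Sigma.ext rfl (heq_of_eq (inv_inv a.2))

theorem FPRed_append_left {A B : List (Σ i, G i)} (h : FPRed G (A ++ B)) : FPRed G A :=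
  ⟨fun a ha => h.1 a (List.mem_append_left _ ha), h.2.prefix ⟨B, rfl⟩⟩

theorem FPRed_append_right {A B : List (Σ i, G i)} (h : FPRed G (A ++ B)) : FPRed G B :=
  ⟨fun a ha => h.1 a (List.mem_append_right _ ha), h.2.suffix ⟨A, rfl⟩⟩

variable (hl : ∀ i, IsFreeLyndonLength (l i))
include hl

theorem FPlam_pos {a : Σ i, G i} {A : List (Σ i, G i)} (h : FPRed G (a :: A)) :
    0 < FPlam G l (a :: A) := by
  rw [FPlam_cons]
  have h1 : 0 < l a.1 a.2 := l_pos_of_ne_one (hl a.1) (h.1 a (List.mem_cons_self))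
  have h2 := FPlam_nonneg G l hl A
  calc (0 : Λ) < l a.1 a.2 := h1
  _ ≤ l a.1 a.2 + FPlam G l A := le_add_of_nonneg_right h2

theorem FPno_involution {i : ι} {x : G i} (hx : x ≠ 1) : x⁻¹ ≠ x := by
  intro h
  have hsq : x ^ 2 = 1 := by
    rw [sq]
    nth_rewrite 2 [← h]
    exact mul_inv_cancel x
  exact sq_ne_one' (hl i) hx hsq

/-- cyclic decomposition of a reduced word -/
theorem FPdecomp : ∀ (n : ℕ) (A : List (Σ i, G i)), A.length ≤ n → FPRed G A → A ≠ [] →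
    ∃ (P : List (Σ i, G i)) (k : Σ i, G i) (K : List (Σ i, G i)) (z : Σ i, G i),
      A = P ++ (k :: K) ++ FPwinv G P ∧ (k :: K).getLast? = some z ∧
        FPletterInv G z ≠ k := by
  intro n
  induction n with
  | zero =>
    intro A hlen hA hne
    cases A with
    | nil => exact absurd rfl hne
    | cons a T => simp at hlen
  | succ n ih =>
    intro A hlen hA hne
    obtain ⟨a, T, rfl⟩ := List.exists_cons_of_ne_nil hne
    cases T with
    | nil =>
      by_cases hc : FPletterInv G a = a
      · exfalso
        obtain ⟨i, x⟩ := a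
        have hx : x ≠ 1 := hA.1 ⟨i, x⟩ (List.mem_cons_self)
        have : x⁻¹ = x := by
          simpa [FPletterInv] using hc
        exact FPno_involution G l hl hx this
      · exact ⟨[], a, [], a, by simp [FPwinv_nil], by simp, hc⟩
    | cons t T' =>
      have htn : t :: T' ≠ [] := List.cons_ne_nil _ _
      set z := (t :: T').getLast htn with hzdef
      have hz : (a :: t :: T').getLast? = some z := by
        rw [List.getLast?_cons_cons, List.getLast?_eq_getLast_of_ne_nil htn]
      by_cases hc : FPletterInv G z = a
      · -- cancellation at the ends
        have hMdef : t :: T' = (t :: T').dropLast ++ [z] :=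
          (List.dropLast_append_getLast htn).symm
        set M := (t :: T').dropLast with hM
        have hMne : M ≠ [] := by
          intro hnil
          rw [hnil, List.nil_append] at hMdef
          -- A = [a, z] with z.1 = a.1 : contradiction with chain'
          have hchain := hA.2
          rw [hMdef, List.isChain_cons_cons] at hchain
          have : a.1 ≠ z.1 := hchain.1
          apply this
          rw [← hc]
          rfl
        have hMred : FPRed G M := by
          have h1 : FPRed G (t :: T') := FPRed_of_cons G hA
          rw [hMdef] at h1
          exact FPRed_append_left G h1
        have hMlen : M.length ≤ n := by
          have h1 : (t :: T').length = M.length + 1 := by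
            rw [hMdef]; simp
          simp only [List.length_cons] at hlen h1
          omega
        obtain ⟨P, k, K, z', hdec, hlast, hnc⟩ := ih M hMlen hMred hMne
        refine ⟨a :: P, k, K, z', ?_, hlast, hnc⟩
        have hza : z = FPletterInv G a := by rw [← hc, FPletterInv_linv]
        rw [show a :: t :: T' = a :: (t :: T') from rfl, hMdef, hdec, hza, FPwinv_cons]
        simp [List.append_assoc]
      · exact ⟨[], a, t :: T', z, by simp [FPwinv_nil], hz, hc⟩

theorem FPCw_self_lt (A : List (Σ i, G i)) (hA : FPRed G A) (hne : A ≠ []) :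
    FPCw G l (FPwinv G A) A < FPlam G l A := by
  obtain ⟨P, k, K, z, hdec, hlast, hnc⟩ :=
    FPdecomp G l hl A.length A le_rfl hA hne
  subst hdec
  have hKred : FPRed G (k :: K) := FPRed_append_right G (FPRed_append_left G hA)
  have hk1 : k.2 ≠ 1 := hKred.1 k (List.mem_cons_self)
  have hwA : FPwinv G (P ++ k :: K ++ FPwinv G P) =
      P ++ (FPwinv G (k :: K) ++ FPwinv G P) := by
    rw [FPwinv_append, FPwinv_append, FPwinv_winv]
  rw [hwA, List.append_assoc, FPCw_prefix G l hl, FPlam_append, FPlam_append,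
    FPlam_winv G l (fun i g => (hl i).1.map_inv g)]
  have key : FPCw G l (FPwinv G (k :: K) ++ FPwinv G P) ((k :: K) ++ FPwinv G P) <
      FPlam G l (k :: K) := by
    cases K with
    | nil =>
      have hzk : z = k := by
        simp only [List.getLast?_singleton, Option.some.injEq] at hlast
        exact hlast.symm
      subst hzk
      obtain ⟨i, x⟩ := z
      have hx : x ≠ 1 := hk1
      have hnc' : (⟨i, x⁻¹⟩ : Σ i, G i) ≠ ⟨i, x⟩ := hnc
      rw [show FPwinv G [(⟨i, x⟩ : Σ i, G i)] ++ FPwinv G P = ⟨i, x⁻¹⟩ :: FPwinv G P from rfl,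
        show ([(⟨i, x⟩ : Σ i, G i)] : List (Σ i, G i)) ++ FPwinv G P = ⟨i, x⟩ :: FPwinv G P
          from rfl,
        FPCw_cons_ne G l hnc', FPCfac_same]
      have hfree := (hl i).2 x hx
      have hcalc : LyndonC (l i) x⁻¹ x = l i x + l i x - l i (x ^ 2) := by
        unfold LyndonC
        rw [(hl i).1.map_inv x, inv_inv, ← sq]
      rw [hcalc, FPlam_cons, FPlam_nil, add_zero]
      have h2 : l i x + l i x - l i (x ^ 2) < l i x + l i x - l i x :=
        sub_lt_sub_left hfree _
      rwa [add_sub_cancel_right] at h2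
    | cons k2 K2 =>
      have hKne : k2 :: K2 ≠ [] := List.cons_ne_nil _ _
      have hlast2 : (k2 :: K2).getLast? = some z := by
        rw [List.getLast?_cons_cons] at hlast
        exact hlast
      have hzmem : z ∈ k2 :: K2 := by
        obtain ⟨h', rfl⟩ := List.mem_getLast?_eq_getLast hlast2
        exact List.getLast_mem h'
      have hz1 : z.2 ≠ 1 := hKred.1 z (List.mem_cons_of_mem _ hzmem)
      have hconcat : k2 :: K2 = (k2 :: K2).dropLast ++ [z] :=
        (List.dropLast_append_getLast? z hlast2).symm
      have hwK : FPwinv G (k :: k2 :: K2) =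
          FPletterInv G z :: (FPwinv G ((k2 :: K2).dropLast) ++ [FPletterInv G k]) := by
        conv_lhs => rw [show k :: k2 :: K2 = [k] ++ (k2 :: K2) from rfl, FPwinv_append,
          hconcat, FPwinv_append]
        rw [show FPwinv G [z] = [FPletterInv G z] from rfl,
          show FPwinv G [k] = [FPletterInv G k] from rfl]
        simp
      rw [hwK, List.cons_append, List.cons_append, FPCw_cons_ne G l hnc]
      -- now bound `FPCfac (linv z) k` by `lam (k :: k2 :: K2)`
      have hlamK : FPlam G l (k :: k2 :: K2) =
          l k.1 k.2 + (FPlam G l ((k2 :: K2).dropLast) + l z.1 z.2) := by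
        have h2 : FPlam G l (k2 :: K2) = FPlam G l ((k2 :: K2).dropLast) + l z.1 z.2 := by
          conv_lhs => rw [hconcat]
          rw [FPlam_append, FPlam_cons, FPlam_nil, add_zero]
        rw [FPlam_cons, h2]
      obtain ⟨i, x⟩ := k
      obtain ⟨p, w⟩ := z
      by_cases hpi : i = p
      · subst hpi
        have hwx : w * x ≠ 1 := by
          intro hcon
          apply hnc
          have hwi : w⁻¹ = x := (eq_inv_of_mul_eq_one_right hcon).symm
          rw [show FPletterInv G ⟨i, w⟩ = ⟨i, w⁻¹⟩ from rfl, hwi]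
        have hpos : 0 < l i (w * x) := l_pos_of_ne_one (hl i) hwx
        have hD := FPlam_nonneg G l hl ((k2 :: K2).dropLast)
        rw [show FPletterInv G ⟨i, w⟩ = ⟨i, w⁻¹⟩ from rfl, FPCfac_same]
        have hcalc : LyndonC (l i) w⁻¹ x = l i w + l i x - l i (w * x) := by
          unfold LyndonC
          rw [(hl i).1.map_inv w, inv_inv]
        rw [hcalc, hlamK]
        have h1 : l i w + l i x - l i (w * x) < l i w + l i x :=
          sub_lt_self _ hpos
        have h2 : l i w + l i x ≤
            l (⟨i, x⟩ : Σ i, G i).1 (⟨i, x⟩ : Σ i, G i).2 +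
              (FPlam G l ((k2 :: K2).dropLast) + l (⟨i, w⟩ : Σ i, G i).1 (⟨i, w⟩ : Σ i, G i).2) := by
          dsimp only
          rw [show l i x + (FPlam G l ((k2 :: K2).dropLast) + l i w) =
            (l i w + l i x) + FPlam G l ((k2 :: K2).dropLast) from by abel]
          exact le_add_of_nonneg_right hD
        exact lt_of_lt_of_le h1 h2
      · rw [show FPletterInv G ⟨p, w⟩ = ⟨p, w⁻¹⟩ from rfl,
          FPCfac_ne G l hpi]
        exact FPlam_pos G l hl hKred
  rw [show FPlam G l P + (FPlam G l (k :: K) + FPlam G l P) =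
    FPlam G l P + FPlam G l P + FPlam G l (k :: K) from by abel]
  exact add_lt_add_right key _
end Square

section Assemble
set_option linter.unusedSectionVars false
attribute [local instance] Classical.propDecidable

variable {Λ : Type*} [AddCommGroup Λ] [LinearOrder Λ] [IsOrderedAddMonoid Λ] {ι : Type*}
  (G : ι → Type*) [∀ i, Group (G i)] (l : ∀ i, G i → Λ)
  (hl : ∀ i, IsFreeLyndonLength (l i))
include hl

theorem FPmain' (f g : Monoid.CoprodI G) :
    LyndonC (FPL G l) f g = FPCw G l (FPrho G f) (FPrho G g) := by
  have h := FPmain G l hl (FPrho G f) (FPrho G g) (FPRed_rho G f) (FPRed_rho G g)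
  rwa [FPpi_rho, FPpi_rho] at h

theorem FPfree (g : Monoid.CoprodI G) (hg : g ≠ 1) : FPL G l g < FPL G l (g ^ 2) := by
  have hne : FPrho G g ≠ [] := by
    intro h
    apply hg
    have := FPpi_rho G g
    rw [h, FPpi_nil] at this
    exact this.symm
  have hrhoinv : FPrho G g⁻¹ = FPwinv G (FPrho G g) :=
    FPrho_eq G (FPRed_winv G (FPRed_rho G g)) (by rw [FPpi_winv, FPpi_rho])
  have h1 := FPmain' G l hl g⁻¹ g
  rw [hrhoinv] at h1
  have h2 := FPCw_self_lt G l hl (FPrho G g) (FPRed_rho G g) hne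
  rw [← h1] at h2
  unfold LyndonC at h2
  rw [inv_inv, ← sq, FPL_inv G l hl] at h2
  have h3 : FPL G l g = FPlam G l (FPrho G g) := rfl
  rw [← h3] at h2
  have h4 : FPL G l g + FPL G l g - FPL G l (g ^ 2) < FPL G l g + FPL G l g - FPL G l g := by
    rw [add_sub_cancel_right]
    exact h2
  exact (sub_lt_sub_iff_left (FPL G l g + FPL G l g)).mp h4

theorem FP_islength : IsLyndonLength (FPL G l) := by
  constructor
  · exact FPL_one G l
  · intro g
    exact FPlam_nonneg G l hl (FPrho G g)
  · intro g
    exact FPL_inv G l hl g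
  · intro f g h hgt
    simp only [FPmain' G l hl] at hgt ⊢
    exact FPCw_isosceles G l hl _ _ _ hgt
  · intro f g
    rw [FPmain' G l hl]
    exact FPCw_two_divides G l hl _ _

theorem FP_of (i : ι) (g : G i) : FPL G l (Monoid.CoprodI.of g) = l i g := by
  by_cases hg : g = 1
  · subst hg
    rw [map_one, FPL_one G l, (hl i).1.map_one]
  · have hred : FPRed G [(⟨i, g⟩ : Σ i, G i)] := by
      constructor
      · intro a ha
        rw [List.mem_singleton] at ha
        subst ha
        exact hg
      · exact List.isChain_singleton _
    have hpi : FPpi G [(⟨i, g⟩ : Σ i, G i)] = Monoid.CoprodI.of g := by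
      simp [FPpi]
    rw [← hpi, FPL_pi G l hred, FPlam_cons, FPlam_nil, add_zero]

end Assemble


/-- The class of Λ-free groups is closed under free products: the free product of a family
of groups with free Lyndon length functions in `Λ` has a free Lyndon length function in `Λ`
extending the given ones. -/
theorem free_product_lambdaFree
    {Λ : Type*} [AddCommGroup Λ] [LinearOrder Λ] [IsOrderedAddMonoid Λ] {ι : Type*}
    (G : ι → Type*) [∀ i, Group (G i)]
    (l : ∀ i, G i → Λ) (hl : ∀ i, IsFreeLyndonLength (l i)) :
    ∃ L : Monoid.CoprodI G → Λ, IsFreeLyndonLength L ∧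
      ∀ (i : ι) (g : G i), L (Monoid.CoprodI.of g) = l i g := by
  exact ⟨FPL G l, ⟨FP_islength G l hl, FPfree G l hl⟩, FP_of G l hl⟩
end

section
/- Every finitely generated residually free group G is a subgroup of a direct product of finitely many fully residually free groups: there exist k ∈ ℕ, a family of groups H₁, …, H_k each of which is fully residually free, and an injective group homomorphism G →* H₁ × ⋯ × H_k. -/
/-- A group is residually free if every nontrivial element can be mapped to a nontrivial
element by some homomorphism to a free group. -/
def ResiduallyFree (G : Type*) [Group G] : Prop :=
  ∀ g : G, g ≠ 1 → ∃ (ι : Type) (φ : G →* FreeGroup ι), φ g ≠ 1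

/-- A group is fully residually free if finite sets of nontrivial elements can be mapped to
nontrivial elements by homomorphisms to free groups. -/
def FullyResiduallyFree (G : Type*) [Group G] : Prop :=
  ∀ S : Finset G, (∀ g ∈ S, g ≠ 1) →
    ∃ (ι : Type) (φ : G →* FreeGroup ι), ∀ g ∈ S, φ g ≠ 1

/-!
Every homomorphism from a finitely generated group to a free group has the same kernel as one to
`FreeGroup ℕ` (Nielsen–Schreier), and `FreeGroup ℕ` embeds in `SL(2, ℤ)` by ping-pong.
Homomorphisms from `FreeGroup α`, `α` finite, to `SL(n, R)` are the points of an affine variety,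
and those killing a given subgroup are cut out by an ideal of its coordinate ring, which is
Noetherian when `R` is (Hilbert basis theorem). Hence the normal subgroups of a finitely generated
group `G` that are intersections of kernels of maps to `FreeGroup ℕ` (the residually closed ones)
satisfy the ascending chain condition.

By Noetherian induction every residually closed `N` is a finite intersection of normal subgroups
with fully residually free quotients: if `G ⧸ N` is not fully residually free, there is a finite
set `F ⊆ G \ N` such that every map to a free group killing `N` kills some `g ∈ F`, so `N` is the
intersection of the residual closures of the strictly larger subgroups `N ⊔ ⟨g⟩`, `g ∈ F`.
Residual freeness of `G` says that `⊥` is residually closed, and the resulting finitely many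
quotient maps embed `G` into the product of the quotients.
-/

open scoped Pointwise MatrixGroups

section PingPong

variable {G α : Type*} [Group G] [MulAction G α]

theorem FreeGroup.injective_lift_of_ping_pong_zpow {ι : Type*} [Nontrivial ι] (a : ι → G)
    (X : ι → Set α) (hX : ∀ i, (X i).Nonempty) (hXdisj : Pairwise (Function.onFun Disjoint X))
    (hpp : Pairwise fun i j => ∀ k : ℤ, k ≠ 0 → a i ^ k • X j ⊆ X i) :
    Function.Injective (FreeGroup.lift a) := by
  have hlift : FreeGroup.lift a =
      (Monoid.CoprodI.lift fun i => FreeGroup.lift fun _ => a i).comp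
        freeGroupEquivCoprodI.toMonoidHom := by
    ext i
    simp
  rw [hlift, MonoidHom.coe_comp]
  refine Function.Injective.comp ?_ (MulEquiv.injective _)
  refine Monoid.CoprodI.lift_injective_of_ping_pong _ ?_ X hX hXdisj fun i j hij => ?_
  · refine Or.inr ⟨Classical.arbitrary ι, ?_⟩
    rw [Cardinal.mk_congr FreeGroup.freeGroupUnitEquivInt, Cardinal.mk_int]
    exact (Cardinal.natCast_lt_aleph0).le
  · refine FreeGroup.freeGroupUnitEquivInt.forall_congr_left.mpr fun k hk => ?_
    change FreeGroup.lift (fun _ => a i) (FreeGroup.of () ^ k) • X j ⊆ X i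
    rw [map_zpow, FreeGroup.lift_apply_of]
    refine hpp hij k fun hk0 => hk ?_
    simp [hk0, FreeGroup.freeGroupUnitEquivInt]

theorem FreeGroup.injective_lift_conj_of_ping_pong {a b : G} {U V : Set α}
    (hU : U.Nonempty) (hUV : Disjoint U V) (ha : ∀ k : ℤ, k ≠ 0 → a ^ k • V ⊆ U)
    (hb : ∀ k : ℤ, k ≠ 0 → b ^ k • U ⊆ V) :
    Function.Injective (FreeGroup.lift fun n : ℕ => b ^ (n : ℤ) * a * (b ^ (n : ℤ))⁻¹) := by
  have shift (m n : ℕ) : b ^ (m : ℤ) = b ^ (n : ℤ) * b ^ ((m : ℤ) - n) := by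
    rw [← zpow_add, add_sub_cancel]
  have hbU {m n : ℕ} (h : m ≠ n) : b ^ ((m : ℤ) - n) • U ⊆ V :=
    hb _ (sub_ne_zero.2 (by exact_mod_cast h))
  refine injective_lift_of_ping_pong_zpow _ (fun n => b ^ (n : ℤ) • U) (fun _ => hU.smul_set)
    (fun n m hnm => ?_) fun n m hnm k hk => ?_
  · change Disjoint (b ^ (n : ℤ) • U) (b ^ (m : ℤ) • U)
    rw [shift m n, mul_smul, Set.disjoint_smul_set]
    exact hUV.mono_right (hbU hnm.symm)
  · have hword : (b ^ (n : ℤ) * a * (b ^ (n : ℤ))⁻¹) ^ k * b ^ (m : ℤ) =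
        b ^ (n : ℤ) * (a ^ k * b ^ ((m : ℤ) - n)) := by
      rw [conj_zpow, shift m n]
      group
    rw [smul_smul, hword, mul_smul, mul_smul]
    exact Set.smul_set_mono ((Set.smul_set_mono (hbU hnm.symm)).trans (ha k hk))

end PingPong

theorem Int.abs_lt_abs_add_two_mul {x y k : ℤ} (hk : k ≠ 0) (h : |x| < |y|) :
    |y| < |x + 2 * k * y| := by
  have hk1 : 1 ≤ |k| := Int.one_le_abs hk
  have htri : |2 * k * y| ≤ |x + 2 * k * y| + |x| := by
    simpa using abs_sub (x + 2 * k * y) x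
  rw [abs_mul, abs_mul, abs_two] at htri
  nlinarith [abs_nonneg y]

namespace ModularGroup

theorem T_zpow_smul (k : ℤ) (v : Fin 2 → ℤ) : T ^ k • v = ![v 0 + k * v 1, v 1] := by
  ext i
  fin_cases i <;>
    simp [Matrix.SpecialLinearGroup.smul_def, coe_T_zpow, Matrix.mulVec, dotProduct,
      Fin.sum_univ_two]

theorem S_smul (v : Fin 2 → ℤ) : S • v = ![-v 1, v 0] := by
  ext i
  fin_cases i <;>
    simp [Matrix.SpecialLinearGroup.smul_def, coe_S, Matrix.mulVec, dotProduct, Fin.sum_univ_two]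

theorem S_inv_smul (v : Fin 2 → ℤ) : S⁻¹ • v = ![v 1, -v 0] := by
  ext i
  fin_cases i <;> simp [Matrix.SpecialLinearGroup.smul_def, Matrix.SpecialLinearGroup.coe_inv,
    coe_S, Matrix.adjugate_fin_two_of, Matrix.mulVec, dotProduct, Fin.sum_univ_two]

theorem T_zpow_two_mul_smul_subset {k : ℤ} (hk : k ≠ 0) :
    T ^ (2 * k) • {v : Fin 2 → ℤ | |v 0| < |v 1|} ⊆ {v | |v 1| < |v 0|} := by
  rintro _ ⟨v, hv, rfl⟩
  simpa [T_zpow_smul] using Int.abs_lt_abs_add_two_mul hk hv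

theorem S_smul_subset : S • {v : Fin 2 → ℤ | |v 1| < |v 0|} ⊆ {v | |v 0| < |v 1|} := by
  rintro _ ⟨v, hv, rfl⟩
  simpa [S_smul] using hv

theorem S_inv_smul_subset : S⁻¹ • {v : Fin 2 → ℤ | |v 1| < |v 0|} ⊆ {v | |v 0| < |v 1|} := by
  rintro _ ⟨v, hv, rfl⟩
  simpa [S_inv_smul] using hv

-- `S * T ^ 2 * S⁻¹` is the lower unitriangular matrix `!![1, 0; -2, 1]`.
theorem exists_injective_freeGroup_nat :
    ∃ ι : FreeGroup ℕ →* SL(2, ℤ), Function.Injective ι := by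
  refine ⟨_, FreeGroup.injective_lift_conj_of_ping_pong (a := T ^ (2 : ℤ))
    (b := S * T ^ (2 : ℤ) * S⁻¹) (U := {v : Fin 2 → ℤ | |v 1| < |v 0|}) (V := {v | |v 0| < |v 1|})
    ⟨![1, 0], by simp⟩ ?_ ?_ ?_⟩
  · exact Set.disjoint_left.2 fun v (hU : |v 1| < |v 0|) hV => hU.not_gt hV
  · intro k hk
    rw [← zpow_mul]
    exact T_zpow_two_mul_smul_subset hk
  · intro k hk
    rw [conj_zpow, mul_smul, mul_smul, ← zpow_mul]
    exact (Set.smul_set_mono ((Set.smul_set_mono S_inv_smul_subset).trans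
      (T_zpow_two_mul_smul_subset hk))).trans S_smul_subset

end ModularGroup

namespace Subgroup

variable {G : Type*} [Group G] (N : Subgroup G) (Γ : Type*) [Group Γ]

def residualClosure : Subgroup G :=
  ⨅ (ψ : G →* Γ) (_ : N ≤ ψ.ker), ψ.ker

theorem le_residualClosure : N ≤ N.residualClosure Γ :=
  le_iInf₂ fun _ h => h

instance residualClosure_normal : (N.residualClosure Γ).Normal :=
  normal_iInf_normal fun ψ => normal_iInf_normal fun _ => ψ.normal_ker

variable {N Γ}

theorem mem_residualClosure {g : G} :
    g ∈ N.residualClosure Γ ↔ ∀ ψ : G →* Γ, N ≤ ψ.ker → ψ g = 1 := by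
  simp only [residualClosure, mem_iInf, MonoidHom.mem_ker]

theorem residualClosure_le_ker_iff {ψ : G →* Γ} : N.residualClosure Γ ≤ ψ.ker ↔ N ≤ ψ.ker :=
  ⟨(le_residualClosure N Γ).trans, fun h _ hg => mem_residualClosure.1 hg ψ h⟩

@[simp]
theorem residualClosure_residualClosure :
    (N.residualClosure Γ).residualClosure Γ = N.residualClosure Γ :=
  le_antisymm (le_iInf₂ fun _ h => residualClosure_le_ker_iff.2 (residualClosure_le_ker_iff.2 h))
    (le_residualClosure _ _)

theorem residualClosure_le_residualClosure_of_injective {Γ' : Type*} [Group Γ'] {j : Γ →* Γ'}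
    (hj : Function.Injective j) : N.residualClosure Γ' ≤ N.residualClosure Γ := fun g hg =>
  mem_residualClosure.2 fun ψ hψ => hj <| by
    simpa using mem_residualClosure.1 hg (j.comp ψ) (hψ.trans (ψ.ker_comp_of_injective j hj).ge)

theorem iInf_residualClosure_sup_zpowers {N : Subgroup G} (hN : N.residualClosure Γ = N)
    {F : Finset G} (hF : ∀ ψ : G →* Γ, N ≤ ψ.ker → ∃ g ∈ F, ψ g = 1) :
    ⨅ g : F, (N ⊔ zpowers (g : G)).residualClosure Γ = N := by
  refine le_antisymm (fun x hx => ?_)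
    (le_iInf fun g => le_sup_left.trans (le_residualClosure _ _))
  rw [← hN, mem_residualClosure]
  intro ψ hψ
  obtain ⟨g, hgF, hg⟩ := hF ψ hψ
  exact residualClosure_le_ker_iff.2 (sup_le hψ (zpowers_le.2 hg)) (mem_iInf.1 hx ⟨g, hgF⟩)

end Subgroup

theorem Matrix.SpecialLinearGroup.map_eq_one_iff {n R S : Type*} [Fintype n] [DecidableEq n]
    [CommRing R] [CommRing S] (f : R →+* S) (M : SpecialLinearGroup n R) :
    SpecialLinearGroup.map f M = 1 ↔
      ∀ i j, (M : Matrix n n R) i j - (1 : Matrix n n R) i j ∈ RingHom.ker f := by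
  simp [SpecialLinearGroup.ext_iff, sub_eq_zero, one_apply, apply_ite f]

section RepresentationVariety

open Matrix

variable (α n R : Type*) [Fintype n] [DecidableEq n] [CommRing R]

noncomputable def SLRepresentationRing.genericMatrix (a : α) :
    Matrix n n (MvPolynomial (α × n × n) R) :=
  of fun i j => MvPolynomial.X (a, i, j)

/-- The coordinate ring of the variety of representations `FreeGroup α →* SL(n, R)`: one variable
for each matrix entry of the image of each generator, subject to `det = 1`. -/
abbrev SLRepresentationRing : Type _ :=
  MvPolynomial (α × n × n) R ⧸
    Ideal.span (Set.range fun a => (SLRepresentationRing.genericMatrix α n R a).det - 1)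

namespace SLRepresentationRing

noncomputable def genericSL (a : α) : SpecialLinearGroup n (SLRepresentationRing α n R) :=
  ⟨(Ideal.Quotient.mk _).mapMatrix (genericMatrix α n R a), by
    rw [← RingHom.map_det, ← map_one (Ideal.Quotient.mk _), Ideal.Quotient.eq]
    exact Ideal.subset_span ⟨a, rfl⟩⟩

noncomputable def relatorIdeal (K : Subgroup (FreeGroup α)) :
    Ideal (SLRepresentationRing α n R) :=
  Ideal.span {r | ∃ w ∈ K, ∃ i j,
    r = (FreeGroup.lift (genericSL α n R) w : Matrix n n _) i j - (1 : Matrix n n _) i j}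

variable {α} in
theorem relatorIdeal_mono : Monotone (relatorIdeal α n R) := fun _ _ hKL =>
  Ideal.span_mono fun _ ⟨w, hw, i, j, hr⟩ => ⟨w, hKL hw, i, j, hr⟩

variable {α n R}

theorem map_eval_genericMatrix (x : α → SpecialLinearGroup n R) (a : α) :
    (genericMatrix α n R a).map (MvPolynomial.eval fun p => x p.1 p.2.1 p.2.2) = x a := by
  ext i j
  simp [genericMatrix]

noncomputable def eval (x : α → SpecialLinearGroup n R) : SLRepresentationRing α n R →+* R :=
  Ideal.Quotient.lift _ (MvPolynomial.eval fun p => x p.1 p.2.1 p.2.2) fun r hr => by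
    refine (Ideal.span_le (I := RingHom.ker _)).2 ?_ hr
    rintro _ ⟨a, rfl⟩
    simp [RingHom.map_det, map_eval_genericMatrix]

theorem map_eval_comp_lift_genericSL (x : α → SpecialLinearGroup n R) :
    (SpecialLinearGroup.map (eval x)).comp (FreeGroup.lift (genericSL α n R)) =
      FreeGroup.lift x :=
  FreeGroup.ext_hom _ _ fun a => by
    rw [MonoidHom.comp_apply, FreeGroup.lift_apply_of, FreeGroup.lift_apply_of]
    ext i j
    exact MvPolynomial.eval_X _

theorem relatorIdeal_le_ker_eval_iff (x : α → SpecialLinearGroup n R)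
    (K : Subgroup (FreeGroup α)) :
    relatorIdeal α n R K ≤ RingHom.ker (eval x) ↔ K ≤ (FreeGroup.lift x).ker := by
  rw [relatorIdeal, Ideal.span_le, ← map_eval_comp_lift_genericSL x]
  simp only [SetLike.le_def, MonoidHom.mem_ker, MonoidHom.comp_apply,
    SpecialLinearGroup.map_eq_one_iff]
  exact ⟨fun h w hw i j => h ⟨w, hw, i, j, rfl⟩, by rintro h _ ⟨w, hw, i, j, rfl⟩; exact h hw i j⟩

end SLRepresentationRing

end RepresentationVariety

namespace Subgroup

open Matrix

variable {G : Type*} [Group G] {n R : Type*} [Fintype n] [DecidableEq n] [CommRing R]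

open SLRepresentationRing in
theorem le_residualClosure_of_relatorIdeal_le {α : Type*} {π : FreeGroup α →* G}
    (hπ : Function.Surjective π) {M N : Subgroup G}
    (h : relatorIdeal α n R (M.comap π) ≤ relatorIdeal α n R (N.comap π)) :
    M ≤ N.residualClosure (SpecialLinearGroup n R) := by
  intro g hg
  rw [mem_residualClosure]
  intro ψ hψ
  obtain ⟨w, rfl⟩ := hπ g
  set x : α → SpecialLinearGroup n R := fun a => ψ (π (FreeGroup.of a))
  have hx : FreeGroup.lift x = ψ.comp π := FreeGroup.ext_hom _ _ fun a => by simp [x]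
  have hN : N.comap π ≤ (FreeGroup.lift x).ker := by
    rw [hx, ← MonoidHom.comap_ker]
    exact comap_mono hψ
  have hM := (relatorIdeal_le_ker_eval_iff x _).1
    (h.trans ((relatorIdeal_le_ker_eval_iff x _).2 hN))
  simpa [hx] using hM hg

-- `relatorIdeal` is strictly monotone on residually closed subgroups.
theorem wellFoundedGT_residuallyClosed [Group.FG G] [IsNoetherianRing R] {Γ : Type*} [Group Γ]
    {j : Γ →* SpecialLinearGroup n R} (hj : Function.Injective j) :
    WellFoundedGT {N : Subgroup G // N.residualClosure Γ = N} := by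
  obtain ⟨α, _, π, hπ⟩ := Group.fg_iff_exists_freeGroup_hom_surjective_finite.1 ‹Group.FG G›
  refine StrictMono.wellFoundedGT
    (f := fun N => SLRepresentationRing.relatorIdeal α n R (N.1.comap π)) fun N M hNM => ?_
  refine lt_of_le_not_ge (SLRepresentationRing.relatorIdeal_mono n R (comap_mono hNM.le))
    fun hle => hNM.not_ge fun g hg => ?_
  rw [← N.2]
  exact N.1.residualClosure_le_residualClosure_of_injective hj
    (le_residualClosure_of_relatorIdeal_le hπ hle hg)

end Subgroup

section Decomposition

variable {G : Type*} [Group G]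

theorem QuotientGroup.exists_finset_of_not_fullyResiduallyFree {N : Subgroup G} [N.Normal]
    (h : ¬ FullyResiduallyFree (G ⧸ N)) (ι : Type) :
    ∃ F : Finset G, (∀ g ∈ F, g ∉ N) ∧
      ∀ ψ : G →* FreeGroup ι, N ≤ ψ.ker → ∃ g ∈ F, ψ g = 1 := by
  classical
  simp only [FullyResiduallyFree, not_forall, not_exists, exists_prop, not_not] at h
  obtain ⟨S, hS1, hS⟩ := h
  refine ⟨S.image Quotient.out, ?_, fun ψ hψ => ?_⟩
  · simp only [Finset.mem_image, forall_exists_index, and_imp, forall_apply_eq_imp_iff₂]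
    intro q hq hqN
    exact hS1 q hq (by rwa [← QuotientGroup.out_eq' q, QuotientGroup.eq_one_iff])
  · obtain ⟨q, hq, hψq⟩ := hS ι (QuotientGroup.lift N ψ hψ)
    refine ⟨q.out, Finset.mem_image_of_mem _ hq, ?_⟩
    rwa [← QuotientGroup.out_eq' q, QuotientGroup.lift_mk'] at hψq

theorem Subgroup.exists_finite_fullyResiduallyFree_quotients [Group.FG G] (N : Subgroup G)
    (hN : N.residualClosure (FreeGroup ℕ) = N) :
    ∃ 𝒩 : Set (Subgroup G), 𝒩.Finite ∧
      (∀ M ∈ 𝒩, ∃ _ : M.Normal, FullyResiduallyFree (G ⧸ M)) ∧ sInf 𝒩 = N := by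
  obtain ⟨j, hj⟩ := ModularGroup.exists_injective_freeGroup_nat
  have := wellFoundedGT_residuallyClosed (G := G) hj
  lift N to {N : Subgroup G // N.residualClosure (FreeGroup ℕ) = N} using hN
  induction N using WellFoundedGT.induction with | _ N IH => ?_
  obtain ⟨N, hN⟩ := N
  have : N.Normal := hN ▸ inferInstance
  by_cases hfrf : FullyResiduallyFree (G ⧸ N)
  · exact ⟨{N}, Set.finite_singleton N, by rintro M rfl; exact ⟨this, hfrf⟩, sInf_singleton⟩
  obtain ⟨F, hFN, hF⟩ := QuotientGroup.exists_finset_of_not_fullyResiduallyFree hfrf ℕ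
  have hM (g : F) : ∃ 𝒩 : Set (Subgroup G), 𝒩.Finite ∧
      (∀ M ∈ 𝒩, ∃ _ : M.Normal, FullyResiduallyFree (G ⧸ M)) ∧
      sInf 𝒩 = (N ⊔ zpowers (g : G)).residualClosure (FreeGroup ℕ) := by
    refine IH ⟨_, residualClosure_residualClosure⟩ ?_
    show N < _
    exact SetLike.lt_iff_le_and_exists.2 ⟨le_sup_left.trans (le_residualClosure _ _), (g : G),
      le_residualClosure _ _ (mem_sup_right (mem_zpowers _)), hFN g g.2⟩
  choose 𝒩 hfin h𝒩 hinf using hM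
  refine ⟨⋃ g, 𝒩 g, Set.finite_iUnion hfin, fun M hM => ?_, ?_⟩
  · obtain ⟨g, hg⟩ := Set.mem_iUnion.1 hM
    exact h𝒩 g M hg
  · rw [sInf_eq_iInf, iInf_iUnion]
    simp_rw [← sInf_eq_iInf, hinf]
    exact iInf_residualClosure_sup_zpowers hN hF

end Decomposition

section ResiduallyFree

universe u

variable {G : Type*} [Group G]

theorem Group.countable_of_fg [Group.FG G] : Countable G := by
  obtain ⟨α, _, π, hπ⟩ := Group.fg_iff_exists_freeGroup_hom_surjective_finite.1 ‹Group.FG G›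
  exact hπ.countable

theorem exists_hom_freeGroup_nat_ker_eq [Group.FG G] {ι : Type*} (φ : G →* FreeGroup ι) :
    ∃ ψ : G →* FreeGroup ℕ, ψ.ker = φ.ker := by
  have : Countable G := Group.countable_of_fg
  have : Countable φ.range := φ.rangeRestrict_surjective.countable
  -- `φ.range` is free by the Nielsen–Schreier theorem.
  let B := IsFreeGroup.toFreeGroup φ.range
  have : Countable (IsFreeGroup.Generators φ.range) :=
    (B.symm.injective.comp FreeGroup.of_injective).countable
  obtain ⟨e, he⟩ := exists_injective_nat (IsFreeGroup.Generators φ.range)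
  refine ⟨(FreeGroup.map e).comp (B.toMonoidHom.comp φ.rangeRestrict), ?_⟩
  rw [MonoidHom.ker_comp_of_injective _ _ (FreeGroup.map_injective he),
    MonoidHom.ker_comp_of_injective _ _ B.injective, MonoidHom.ker_rangeRestrict]

theorem ResiduallyFree.of_injective {G' : Type*} [Group G'] {f : G →* G'}
    (hf : Function.Injective f) (h : ResiduallyFree G') : ResiduallyFree G := fun g hg =>
  let ⟨ι, φ, hφ⟩ := h (f g) ((map_ne_one_iff f hf).2 hg)
  ⟨ι, φ.comp f, hφ⟩

theorem ResiduallyFree.residualClosure_bot [Group.FG G] (h : ResiduallyFree G) :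
    (⊥ : Subgroup G).residualClosure (FreeGroup ℕ) = ⊥ := by
  refine eq_bot_iff.2 fun g hg => Subgroup.mem_bot.2 (not_not.1 fun hg1 => ?_)
  obtain ⟨ι, φ, hφ⟩ := h g hg1
  obtain ⟨ψ, hψ⟩ := exists_hom_freeGroup_nat_ker_eq φ
  have : g ∈ ψ.ker := Subgroup.mem_residualClosure.1 hg ψ bot_le
  exact hφ (by rwa [hψ] at this)

theorem ResiduallyFree.exists_injective_pi_fullyResiduallyFree {G : Type u} [Group G]
    [Group.FG G] (h : ResiduallyFree G) :
    ∃ (k : ℕ) (H : Fin k → Type u) (_ : ∀ i, Group (H i)), (∀ i, FullyResiduallyFree (H i)) ∧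
      ∃ φ : G →* (∀ i, H i), Function.Injective φ := by
  obtain ⟨𝒩, hfin, h𝒩, hinf⟩ :=
    Subgroup.exists_finite_fullyResiduallyFree_quotients ⊥ h.residualClosure_bot
  choose hnormal hfrf using h𝒩
  have : Finite 𝒩 := hfin.to_subtype
  have (M : 𝒩) : (M : Subgroup G).Normal := hnormal M M.2
  let e := (Finite.equivFin 𝒩).symm
  refine ⟨_, fun i => G ⧸ (e i : Subgroup G), inferInstance, fun i => hfrf _ (e i).2,
    MonoidHom.pi fun i => QuotientGroup.mk' _, (injective_iff_map_eq_one _).2 fun x hx => ?_⟩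
  have hxe (i) : x ∈ (e i : Subgroup G) := (QuotientGroup.eq_one_iff x).1 (congrFun hx i)
  have hx' : x ∈ sInf 𝒩 := Subgroup.mem_sInf.2 fun M hM => by
    simpa only [e.apply_symm_apply] using hxe (e.symm ⟨M, hM⟩)
  rwa [hinf, Subgroup.mem_bot] at hx'

end ResiduallyFree

/-- Every finitely generated residually free group embeds into a direct product of finitely
many fully residually free groups. -/
theorem residuallyFree_embeds_product_fullyResiduallyFree
    {G : Type*} [Group G] (hfg : Group.FG G) (h : ResiduallyFree G) :
    ∃ (k : ℕ) (H : Fin k → Type) (_ : ∀ i, Group (H i)),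
      (∀ i, FullyResiduallyFree (H i)) ∧
      ∃ φ : G →* (∀ i, H i), Function.Injective φ := by
  -- The factors have to live in `Type`, so `G` is first replaced by an isomorphic group there.
  obtain ⟨α, _, π, hπ⟩ := Group.fg_iff_exists_freeGroup_hom_surjective_finite.1 hfg
  let e : FreeGroup α ⧸ π.ker ≃* G := QuotientGroup.quotientKerEquivOfSurjective π hπ
  have : Group.FG (FreeGroup α ⧸ π.ker) := QuotientGroup.fg _
  obtain ⟨k, H, _, hH, φ, hφ⟩ :=
    (h.of_injective e.injective).exists_injective_pi_fullyResiduallyFree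
  exact ⟨k, H, _, hH, φ.comp e.symm.toMonoidHom, hφ.comp e.symm.injective⟩
end
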